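/- arXiv:2206.09270 — 2 statements merged into one kernel-verified Lean document; each statement's English description precedes it below -/
import Mathlib

section
/- Let V be a matricial operator system inside Matrix (Fin d) (Fin d) ℂ, let B be a finite-dimensional C*-algebra, and let i : V → B be a unital complete order embedding that has the extension property and is rigid. If Φ : ℝ → (V →ₗ[ℂ] V) satisfies Φ(0) = id, Φ(s+t) = Φ(s) ∘ Φ(t) for all s,t ∈ ℝ (so each Φ(t) is invertible with inverse Φ(−t)), each Φ(t) is unital completely positive, and t ↦ Φ(t) is continuous in operator norm, then there exists Ψ : ℝ → (B →ₗ[ℂ] B) with Ψ(0) = id, Ψ(s+t) = Ψ(s) ∘ Ψ(t), each Ψ(t) unital completely positive, t ↦ Ψ(t) continuous, and Ψ(t) ∘ i = i ∘ Φ(t) for all t ∈ ℝ; moreover for each t the map Ψ(t) is the unique unital completely positive map on B satisfying Ψ(t) ∘ i = i ∘ Φ(t), and each Ψ(t) is a *-algebra automorphism of B (multiplicative and star-preserving). -/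
/-! Lifting `Φ t` through `i` by the extension property gives UCP maps `Ψ t` on `B`. Rigidity
makes the lift unique: composing two lifts with a lift of `Φ (-t)` gives UCP maps fixing `i(V)`,
hence identities. Uniqueness yields the group law, so each `Ψ t` is UCP with UCP inverse
`Ψ (-t)`; the Schwarz inequalities `ψ(x)* ψ(x) ≤ ψ(x* x)` for a map and for its inverse then
force equality, and polarization makes `Ψ t` multiplicative. Being *-homomorphisms, the `Ψ t`
are contractive, so they range in the compact unit ball of `B →L[ℂ] B`; any cluster point at `t`
is again a unital *-homomorphism lifting `Φ t`, hence equals `Ψ t`, which gives continuity. -/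

open scoped NNReal ComplexOrder

/-- The `(n*d) × (n*d)` block complex matrix associated to an `n × n` matrix whose entries
are `d × d` complex matrices. -/
def blockMat {n d : ℕ} (M : Fin n → Fin n → Matrix (Fin d) (Fin d) ℂ) :
    Matrix (Fin n × Fin d) (Fin n × Fin d) ℂ :=
  Matrix.of fun p q => M p.1 q.1 p.2 q.2

/-- An `n × n` matrix with entries in a subspace `V` of `d × d` complex matrices is positive if
the associated block complex matrix is positive semidefinite. -/
def PosOverV {d : ℕ} {V : Submodule ℂ (Matrix (Fin d) (Fin d) ℂ)} {n : ℕ}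
    (M : Fin n → Fin n → V) : Prop :=
  (blockMat fun k l => (M k l : Matrix (Fin d) (Fin d) ℂ)).PosSemidef

/-- Positivity of an element of the `n × n` matrices over a C*-algebra `B`: it is positive
iff it factors as `star y * y`. -/
def PosOverB {B : Type*} [Ring B] [StarRing B] {n : ℕ}
    (x : Matrix (Fin n) (Fin n) B) : Prop :=
  ∃ y : Matrix (Fin n) (Fin n) B, x = star y * y

section Defs

variable {d : ℕ} (V : Submodule ℂ (Matrix (Fin d) (Fin d) ℂ))
variable (B : Type*) [NormedRing B] [StarRing B] [CStarRing B] [NormedAlgebra ℂ B]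
  [CompleteSpace B] [StarModule ℂ B]

/-- A linear map on a matricial operator system `V` is unital completely positive. -/
def IsUCPVV (h1 : (1 : Matrix (Fin d) (Fin d) ℂ) ∈ V) (φ : V →ₗ[ℂ] V) : Prop :=
  φ ⟨1, h1⟩ = ⟨1, h1⟩ ∧
  ∀ (n : ℕ) (M : Fin n → Fin n → V), PosOverV M → PosOverV fun k l => φ (M k l)

/-- A linear map from a matricial operator system `V` into a C*-algebra `B` is unital
completely positive. -/
def IsUCPVB (h1 : (1 : Matrix (Fin d) (Fin d) ℂ) ∈ V) (θ : V →ₗ[ℂ] B) : Prop :=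
  θ ⟨1, h1⟩ = 1 ∧
  ∀ (n : ℕ) (M : Fin n → Fin n → V), PosOverV M →
    PosOverB (Matrix.of fun k l => θ (M k l))

/-- A linear map on a C*-algebra `B` is unital completely positive. -/
def IsUCPBB (ψ : B →ₗ[ℂ] B) : Prop :=
  ψ 1 = 1 ∧
  ∀ (n : ℕ) (x : Matrix (Fin n) (Fin n) B), PosOverB x → PosOverB (x.map ⇑ψ)

/-- `i : V → B` is a unital complete order embedding: it is unital and for every `n`, an
`n × n` matrix over `V` is positive iff its entrywise image under `i` is positive. -/
def IsUCOEmbedding (h1 : (1 : Matrix (Fin d) (Fin d) ℂ) ∈ V) (i : V →ₗ[ℂ] B) : Prop :=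
  (i ⟨1, h1⟩ = 1) ∧
  ∀ (n : ℕ) (M : Fin n → Fin n → V),
    PosOverV M ↔ PosOverB (Matrix.of fun k l => i (M k l))

/-- `i : V → B` has the extension property: every UCP map `θ : V → B` extends to a UCP map
on all of `B` through `i`. -/
def HasExtensionProperty (h1 : (1 : Matrix (Fin d) (Fin d) ℂ) ∈ V) (i : V →ₗ[ℂ] B) : Prop :=
  ∀ θ : V →ₗ[ℂ] B, IsUCPVB V B h1 θ →
    ∃ Θ : B →ₗ[ℂ] B, IsUCPBB B Θ ∧ ∀ v : V, Θ (i v) = θ v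

/-- `i : V → B` is rigid: the only UCP map on `B` fixing the image of `i` is the identity. -/
def IsRigid (i : V →ₗ[ℂ] B) : Prop :=
  ∀ ψ : B →ₗ[ℂ] B, IsUCPBB B ψ → (∀ v : V, ψ (i v) = i v) → ψ = LinearMap.id

end Defs

open Filter Topology

section StarRing

variable {B : Type*} [Ring B] [StarRing B] {n : ℕ}

lemma Matrix.star_mul_self_apply (y : Matrix (Fin n) (Fin n) B) (k l : Fin n) :
    (star y * y) k l = ∑ m, star (y m k) * y m l := by
  simp [Matrix.mul_apply, Matrix.star_apply]

lemma PosOverB.isHermitian {x : Matrix (Fin n) (Fin n) B} (hx : PosOverB x) : x.IsHermitian := by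
  obtain ⟨y, rfl⟩ := hx
  rw [Matrix.star_eq_conjTranspose]
  exact Matrix.isHermitian_conjTranspose_mul_self y

lemma PosOverB.map {C F : Type*} [Ring C] [StarRing C] [FunLike F B C] [RingHomClass F B C]
    [StarHomClass F B C] (f : F) {x : Matrix (Fin n) (Fin n) B} (hx : PosOverB x) :
    PosOverB (x.map f) := by
  obtain ⟨y, rfl⟩ := hx
  refine ⟨y.map f, ?_⟩
  ext k l
  simp [Matrix.mul_apply, Matrix.star_apply, map_star]

lemma posOverB_star_mul_self (c : B) : PosOverB (Matrix.of fun _ _ : Fin 1 => star c * c) :=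
  ⟨Matrix.of fun _ _ => c, by ext; simp [Matrix.mul_apply, Matrix.star_apply]⟩

lemma posOverB_schwarz_matrix (x : B) : PosOverB !![1, x; star x, star x * x] := by
  refine ⟨!![1, x; 0, 0], ?_⟩
  ext k l
  fin_cases k <;> fin_cases l <;> simp [Matrix.mul_apply, Matrix.star_apply, Fin.sum_univ_two]

variable [PartialOrder B] [StarOrderedRing B]

lemma PosOverB.apply_self_nonneg {x : Matrix (Fin n) (Fin n) B} (hx : PosOverB x) (k : Fin n) :
    0 ≤ x k k := by
  obtain ⟨y, hy⟩ := hx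
  rw [hy, Matrix.star_mul_self_apply]
  exact Finset.sum_nonneg fun m _ => star_mul_self_nonneg _

lemma PosOverB.star_mul_le {N : Matrix (Fin 2) (Fin 2) B} (hN : PosOverB N) (h00 : N 0 0 = 1) :
    star (N 0 1) * N 0 1 ≤ N 1 1 := by
  have h10 : N 1 0 = star (N 0 1) := by
    simpa using congrFun₂ hN.isHermitian.symm 1 0
  obtain ⟨y, hy⟩ := hN
  -- the Schur complement `N 1 1 - star a * a` (for `a = N 0 1`) is the Gram sum of the
  -- columns `y m 1 - y m 0 * a`
  have key (a : B) : ∑ m, star (y m 1 - y m 0 * a) * (y m 1 - y m 0 * a)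
      = N 1 1 - N 1 0 * a - star a * N 0 1 + star a * N 0 0 * a := by
    simp only [hy, Matrix.star_mul_self_apply, star_sub, star_mul, mul_sub, sub_mul,
      Finset.sum_sub_distrib, Finset.mul_sum, Finset.sum_mul, mul_assoc]
    abel
  have hschur := key (N 0 1)
  rw [h00, h10, mul_one, sub_add_cancel] at hschur
  rw [← sub_nonneg, ← hschur]
  exact Finset.sum_nonneg fun m _ => star_mul_self_nonneg _

end StarRing

lemma LinearMap.map_star_mul_of_map_star_mul_self {A C : Type*} [Ring A] [StarRing A]
    [Algebra ℂ A] [StarModule ℂ A] [Ring C] [StarRing C] [Algebra ℂ C] [StarModule ℂ C]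
    (ψ : A →ₗ[ℂ] C) (h : ∀ a, ψ (star a * a) = star (ψ a) * ψ a) (a b : A) :
    ψ (star a * b) = star (ψ a) * ψ b := by
  have hsym (a b : A) : ψ (star a * b) + ψ (star b * a) = star (ψ a) * ψ b + star (ψ b) * ψ a := by
    have hab := h (a + b)
    simp only [star_add, add_mul, mul_add, map_add, h] at hab
    rw [← add_right_inj (star (ψ a) * ψ a), ← add_left_inj (star (ψ b) * ψ b)]
    convert hab using 1 <;> abel
  have hI := hsym a (Complex.I • b)
  simp only [star_smul, Complex.star_def, Complex.conj_I, neg_smul, neg_mul, smul_mul_assoc,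
    mul_smul_comm, map_neg, map_smul] at hI
  have hanti : ψ (star a * b) - ψ (star b * a) = star (ψ a) * ψ b - star (ψ b) * ψ a := by
    apply smul_right_injective C Complex.I_ne_zero
    linear_combination (norm := module) hI
  apply smul_right_injective C (two_ne_zero (α := ℂ))
  simp only [two_smul]
  linear_combination (norm := abel) hsym a b + hanti

structure IsStarAlgHom {A C : Type*} [Semiring A] [Star A] [Module ℂ A] [Semiring C] [Star C]
    [Module ℂ C] (ψ : A →ₗ[ℂ] C) : Prop where
  map_one : ψ 1 = 1
  map_mul (x y : A) : ψ (x * y) = ψ x * ψ y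
  map_star (x : A) : ψ (star x) = star (ψ x)

namespace IsStarAlgHom

variable {A C : Type*}

def toStarAlgHom [Semiring A] [Star A] [Algebra ℂ A] [Semiring C] [Star C] [Algebra ℂ C]
    {ψ : A →ₗ[ℂ] C} (h : IsStarAlgHom ψ) : A →⋆ₐ[ℂ] C :=
  { AlgHom.ofLinearMap ψ h.map_one h.map_mul with map_star' := h.map_star }

lemma isUCPBB [CStarAlgebra A] {ψ : A →ₗ[ℂ] A} (h : IsStarAlgHom ψ) : IsUCPBB A ψ :=
  ⟨h.map_one, fun _ _ hx => hx.map h.toStarAlgHom⟩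

lemma norm_apply_le [CStarAlgebra A] [CStarAlgebra C] {ψ : A →ₗ[ℂ] C} (h : IsStarAlgHom ψ)
    (a : A) : ‖ψ a‖ ≤ ‖a‖ :=
  NonUnitalStarAlgHom.norm_apply_le h.toStarAlgHom a

end IsStarAlgHom

lemma isClosed_setOf_isStarAlgHom {A C : Type*} [NormedRing A] [StarRing A] [NormedAlgebra ℂ A]
    [NormedRing C] [StarRing C] [NormedAlgebra ℂ C] [ContinuousStar C] :
    IsClosed {L : A →L[ℂ] C | IsStarAlgHom (L : A →ₗ[ℂ] C)} := by
  have hset : {L : A →L[ℂ] C | IsStarAlgHom (L : A →ₗ[ℂ] C)} =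
      {L | L 1 = 1} ∩ (⋂ x, ⋂ y, {L | L (x * y) = L x * L y}) ∩
        ⋂ x, {L | L (star x) = star (L x)} :=
    Set.ext fun L => by
      simp only [Set.mem_ofPred_eq, Set.mem_inter_iff, Set.mem_iInter]
      exact ⟨fun h => ⟨⟨h.map_one, h.map_mul⟩, h.map_star⟩, fun ⟨⟨h1, hm⟩, hs⟩ => ⟨h1, hm, hs⟩⟩
  have hev (x : A) : Continuous fun L : A →L[ℂ] C => L x := continuous_eval_const x
  rw [hset]
  exact ((isClosed_eq (hev 1) continuous_const).inter (isClosed_iInter fun x => isClosed_iInter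
    fun y => isClosed_eq (hev _) ((hev x).mul (hev y)))).inter
    (isClosed_iInter fun x => isClosed_eq (hev _) (hev x).star)

section CStarAlgebra

variable {B : Type*} [CStarAlgebra B]

lemma isUCPBB_id : IsUCPBB B LinearMap.id :=
  ⟨rfl, fun _ _ hx => by simpa using hx⟩

lemma IsUCPBB.comp {ψ φ : B →ₗ[ℂ] B} (hψ : IsUCPBB B ψ) (hφ : IsUCPBB B φ) :
    IsUCPBB B (ψ.comp φ) :=
  ⟨by simp [hφ.1, hψ.1], fun n x hx => by simpa [Matrix.map_map] using hψ.2 n _ (hφ.2 n x hx)⟩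

lemma IsUCPBB.map_star {ψ : B →ₗ[ℂ] B} (hψ : IsUCPBB B ψ) (x : B) : ψ (star x) = star (ψ x) := by
  simpa using congrFun₂ (hψ.2 2 _ (posOverB_schwarz_matrix x)).isHermitian.symm 1 0

section Order

variable [PartialOrder B] [StarOrderedRing B]

lemma IsUCPBB.map_nonneg {ψ : B →ₗ[ℂ] B} (hψ : IsUCPBB B ψ) {b : B} (hb : 0 ≤ b) : 0 ≤ ψ b := by
  obtain ⟨c, rfl⟩ := CStarAlgebra.nonneg_iff_eq_star_mul_self.mp hb
  simpa using (hψ.2 1 _ (posOverB_star_mul_self c)).apply_self_nonneg 0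

lemma IsUCPBB.star_mul_le_map_star_mul {ψ : B →ₗ[ℂ] B} (hψ : IsUCPBB B ψ) (x : B) :
    star (ψ x) * ψ x ≤ ψ (star x * x) := by
  simpa using (hψ.2 2 _ (posOverB_schwarz_matrix x)).star_mul_le (by simp [hψ.1])

end Order

lemma IsUCPBB.map_star_mul_self_of_comp_eq_id {ψ φ : B →ₗ[ℂ] B} (hψ : IsUCPBB B ψ)
    (hφ : IsUCPBB B φ) (hφψ : φ.comp ψ = LinearMap.id) (hψφ : ψ.comp φ = LinearMap.id) (x : B) :
    ψ (star x * x) = star (ψ x) * ψ x := by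
  let _ : PartialOrder B := CStarAlgebra.spectralOrder B
  have _ := CStarAlgebra.spectralOrderedRing B
  have hφψx : φ (ψ x) = x := LinearMap.congr_fun hφψ x
  set D := ψ (star x * x) - star (ψ x) * ψ x
  have hD : 0 ≤ D := sub_nonneg.mpr (hψ.star_mul_le_map_star_mul x)
  have hφD : φ D ≤ 0 := by
    have := hφ.star_mul_le_map_star_mul (ψ x)
    rw [hφψx] at this
    rwa [map_sub, ← LinearMap.comp_apply φ ψ, hφψ, LinearMap.id_apply, sub_nonpos]
  have hφD0 : φ D = 0 := le_antisymm hφD (hφ.map_nonneg hD)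
  have hD0 : D = 0 := by simpa [hφD0] using (LinearMap.congr_fun hψφ D).symm
  exact sub_eq_zero.mp hD0

lemma IsUCPBB.isStarAlgHom_of_comp_eq_id {ψ φ : B →ₗ[ℂ] B} (hψ : IsUCPBB B ψ)
    (hφ : IsUCPBB B φ) (hφψ : φ.comp ψ = LinearMap.id) (hψφ : ψ.comp φ = LinearMap.id) :
    IsStarAlgHom ψ where
  map_one := hψ.1
  map_mul x y := by
    have := ψ.map_star_mul_of_map_star_mul_self
      (hψ.map_star_mul_self_of_comp_eq_id hφ hφψ hψφ) (star x) y
    rwa [star_star, hψ.map_star, star_star] at this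
  map_star := hψ.map_star

end CStarAlgebra

section Embedding

variable {d : ℕ} {V : Submodule ℂ (Matrix (Fin d) (Fin d) ℂ)} {B : Type*} [CStarAlgebra B]
  {i : V →ₗ[ℂ] B}

lemma HasExtensionProperty.exists_isUCPBB_comp_eq {h1 : (1 : Matrix (Fin d) (Fin d) ℂ) ∈ V}
    (hext : HasExtensionProperty V B h1 i) (hemb : IsUCOEmbedding V B h1 i) {φ : V →ₗ[ℂ] V}
    (hφ : IsUCPVV V h1 φ) : ∃ ψ : B →ₗ[ℂ] B, IsUCPBB B ψ ∧ ∀ v, ψ (i v) = i (φ v) :=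
  hext (i.comp φ) ⟨by simp [hφ.1, hemb.1], fun n M hM => (hemb.2 n _).mp (hφ.2 n M hM)⟩

lemma IsRigid.comp_eq_id (hrig : IsRigid V B i) {φ φ' : V →ₗ[ℂ] V}
    (hφ'φ : φ'.comp φ = LinearMap.id) {ψ χ : B →ₗ[ℂ] B} (hψ : IsUCPBB B ψ)
    (hψi : ∀ v, ψ (i v) = i (φ v)) (hχ : IsUCPBB B χ) (hχi : ∀ v, χ (i v) = i (φ' v)) :
    χ.comp ψ = LinearMap.id :=
  hrig _ (hχ.comp hψ) fun v => by simp [hψi, hχi, ← LinearMap.comp_apply φ' φ, hφ'φ]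

lemma IsRigid.eq_of_comp_eq_id (hrig : IsRigid V B i) {φ φ' : V →ₗ[ℂ] V}
    (hφφ' : φ.comp φ' = LinearMap.id) (hφ'φ : φ'.comp φ = LinearMap.id)
    {ψ ψ' χ : B →ₗ[ℂ] B} (hψ : IsUCPBB B ψ) (hψi : ∀ v, ψ (i v) = i (φ v))
    (hψ' : IsUCPBB B ψ') (hψ'i : ∀ v, ψ' (i v) = i (φ v))
    (hχ : IsUCPBB B χ) (hχi : ∀ v, χ (i v) = i (φ' v)) : ψ = ψ' := by
  have hχψ := hrig.comp_eq_id hφ'φ hψ hψi hχ hχi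
  have hψ'χ := hrig.comp_eq_id hφφ' hχ hχi hψ' hψ'i
  calc ψ = (ψ'.comp χ).comp ψ := by rw [hψ'χ, LinearMap.id_comp]
    _ = ψ'.comp (χ.comp ψ) := LinearMap.comp_assoc _ _ _
    _ = ψ' := by rw [hχψ, LinearMap.comp_id]

end Embedding

theorem continuous_of_unique_isUCPBB_lift {B X W : Type*} [CStarAlgebra B] [FiniteDimensional ℂ B]
    [TopologicalSpace X] [AddCommGroup W] [Module ℂ W] (i : W →ₗ[ℂ] B) {θ : X → W →ₗ[ℂ] B}
    (hθ : ∀ w, Continuous fun x => θ x w) {Ψ : X → B →ₗ[ℂ] B} (hΨ : ∀ x, IsStarAlgHom (Ψ x))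
    (hΨi : ∀ x w, Ψ x (i w) = θ x w)
    (huniq : ∀ x ψ, IsUCPBB B ψ → (∀ w, ψ (i w) = θ x w) → ψ = Ψ x) :
    Continuous fun x => LinearMap.toContinuousLinearMap (Ψ x) := by
  have : ProperSpace (B →L[ℂ] B) := FiniteDimensional.proper ℂ _
  refine continuous_iff_continuousAt.mpr fun x => ?_
  refine (isCompact_closedBall (0 : B →L[ℂ] B) 1).tendsto_nhds_of_unique_mapClusterPt
    (Eventually.of_forall fun y => ?_) fun L _ hL => ?_
  · rw [mem_closedBall_zero_iff]
    exact ContinuousLinearMap.opNorm_le_bound _ zero_le_one fun a => by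
      simpa using (hΨ y).norm_apply_le a
  have hLhom : IsStarAlgHom (L : B →ₗ[ℂ] B) :=
    isClosed_setOf_isStarAlgHom.mem_of_mapClusterPt hL (Eventually.of_forall hΨ)
  have hLi (w : W) : L (i w) = θ x w := by
    have hcl := hL.tendsto_comp (continuous_eval_const (i w)).continuousAt
    refine eq_of_nhds_neBot (ClusterPt.mono hcl ?_)
    simp only [Function.comp_def, LinearMap.coe_toContinuousLinearMap', hΨi]
    exact (hθ w).tendsto x
  change L = LinearMap.toContinuousLinearMap (Ψ x)
  rw [← huniq x _ hLhom.isUCPBB hLi]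
  rfl

theorem extension_of_ucp_groups_general
    {d : ℕ} (V : Submodule ℂ (Matrix (Fin d) (Fin d) ℂ))
    (h1 : (1 : Matrix (Fin d) (Fin d) ℂ) ∈ V)
    (B : Type*) [NormedRing B] [StarRing B] [CStarRing B] [NormedAlgebra ℂ B]
    [CompleteSpace B] [StarModule ℂ B] [FiniteDimensional ℂ B]
    (i : V →ₗ[ℂ] B)
    (hemb : IsUCOEmbedding V B h1 i)
    (hext : HasExtensionProperty V B h1 i)
    (hrig : IsRigid V B i)
    (Φ : ℝ → (V →ₗ[ℂ] V))
    (hΦ0 : Φ 0 = LinearMap.id)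
    (hΦadd : ∀ s t : ℝ, Φ (s + t) = (Φ s).comp (Φ t))
    (hΦucp : ∀ t : ℝ, IsUCPVV V h1 (Φ t))
    (hΦcont : Continuous fun t : ℝ => LinearMap.toContinuousLinearMap (Φ t)) :
    ∃ Ψ : ℝ → (B →ₗ[ℂ] B),
      Ψ 0 = LinearMap.id ∧
      (∀ s t : ℝ, Ψ (s + t) = (Ψ s).comp (Ψ t)) ∧
      (∀ t : ℝ, IsUCPBB B (Ψ t)) ∧
      Continuous (fun t : ℝ => LinearMap.toContinuousLinearMap (Ψ t)) ∧
      (∀ (t : ℝ) (v : V), Ψ t (i v) = i (Φ t v)) ∧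
      (∀ (t : ℝ) (ψ : B →ₗ[ℂ] B), IsUCPBB B ψ → (∀ v : V, ψ (i v) = i (Φ t v)) →
        ψ = Ψ t) ∧
      (∀ (t : ℝ) (x y : B), Ψ t (x * y) = Ψ t x * Ψ t y) ∧
      (∀ (t : ℝ) (x : B), Ψ t (star x) = star (Ψ t x)) := by
  let _ : CStarAlgebra B := { ‹NormedRing B›, ‹StarRing B›, ‹CStarRing B›, ‹NormedAlgebra ℂ B›,
    ‹CompleteSpace B›, ‹StarModule ℂ B› with }
  have hΦneg_comp (t : ℝ) : (Φ (-t)).comp (Φ t) = LinearMap.id := by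
    rw [← hΦadd, neg_add_cancel, hΦ0]
  have hΦcomp_neg (t : ℝ) : (Φ t).comp (Φ (-t)) = LinearMap.id := by
    simpa using hΦneg_comp (-t)
  choose Ψ hΨucp hΨi using fun t => hext.exists_isUCPBB_comp_eq hemb (hΦucp t)
  have huniq (t : ℝ) (ψ : B →ₗ[ℂ] B) (hψ : IsUCPBB B ψ) (hψi : ∀ v, ψ (i v) = i (Φ t v)) :
      ψ = Ψ t :=
    hrig.eq_of_comp_eq_id (hΦcomp_neg t) (hΦneg_comp t) hψ hψi (hΨucp t) (hΨi t)
      (hΨucp (-t)) (hΨi (-t))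
  have hΨhom (t : ℝ) : IsStarAlgHom (Ψ t) := by
    refine (hΨucp t).isStarAlgHom_of_comp_eq_id (hΨucp (-t)) ?_ ?_
    · exact hrig.comp_eq_id (hΦneg_comp t) (hΨucp t) (hΨi t) (hΨucp (-t)) (hΨi (-t))
    · exact hrig.comp_eq_id (hΦcomp_neg t) (hΨucp (-t)) (hΨi (-t)) (hΨucp t) (hΨi t)
  refine ⟨Ψ, (huniq 0 _ isUCPBB_id (by simp [hΦ0])).symm, fun s t => ?_, hΨucp, ?_, hΨi, huniq,
    fun t => (hΨhom t).map_mul, fun t => (hΨhom t).map_star⟩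
  · exact (huniq _ _ ((hΨucp s).comp (hΨucp t)) fun v => by simp [hΨi, hΦadd]).symm
  · exact continuous_of_unique_isUCPBB_lift i (θ := fun t => i.comp (Φ t))
      (fun v => i.continuous_of_finiteDimensional.comp (hΦcont.eval_const v)) hΨhom hΨi huniq

/-- **Extension of groups** (Theorem 3.7): any continuous one-parameter group of unital
completely positive maps on a matricial operator system `V` extends uniquely, through a rigid
unital complete order embedding with the extension property `i : V → B` into a
finite-dimensional C*-algebra `B`, to a continuous group of *-algebra automorphisms of `B`. -/
theorem extension_of_ucp_groups
    {d : ℕ} (V : Submodule ℂ (Matrix (Fin d) (Fin d) ℂ))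
    (h1 : (1 : Matrix (Fin d) (Fin d) ℂ) ∈ V)
    (hstar : ∀ v ∈ V, v.conjTranspose ∈ V)
    (B : Type*) [NormedRing B] [StarRing B] [CStarRing B] [NormedAlgebra ℂ B]
    [CompleteSpace B] [StarModule ℂ B] [FiniteDimensional ℂ B]
    (i : V →ₗ[ℂ] B)
    (hemb : IsUCOEmbedding V B h1 i)
    (hext : HasExtensionProperty V B h1 i)
    (hrig : IsRigid V B i)
    (Φ : ℝ → (V →ₗ[ℂ] V))
    (hΦ0 : Φ 0 = LinearMap.id)
    (hΦadd : ∀ s t : ℝ, Φ (s + t) = (Φ s).comp (Φ t))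
    (hΦucp : ∀ t : ℝ, IsUCPVV V h1 (Φ t))
    (hΦcont : Continuous fun t : ℝ => LinearMap.toContinuousLinearMap (Φ t)) :
    ∃ Ψ : ℝ → (B →ₗ[ℂ] B),
      Ψ 0 = LinearMap.id ∧
      (∀ s t : ℝ, Ψ (s + t) = (Ψ s).comp (Ψ t)) ∧
      (∀ t : ℝ, IsUCPBB B (Ψ t)) ∧
      Continuous (fun t : ℝ => LinearMap.toContinuousLinearMap (Ψ t)) ∧
      (∀ (t : ℝ) (v : V), Ψ t (i v) = i (Φ t v)) ∧
      (∀ (t : ℝ) (ψ : B →ₗ[ℂ] B), IsUCPBB B ψ → (∀ v : V, ψ (i v) = i (Φ t v)) →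
        ψ = Ψ t) ∧
      (∀ (t : ℝ) (x y : B), Ψ t (x * y) = Ψ t x * Ψ t y) ∧
      (∀ (t : ℝ) (x : B), Ψ t (star x) = star (Ψ t x)) :=
  extension_of_ucp_groups_general V h1 B i hemb hext hrig Φ hΦ0 hΦadd hΦucp hΦcont
end

section
/- Let V be a matricial operator system inside Matrix (Fin d) (Fin d) ℂ, let B be a finite-dimensional C*-algebra, let i : V → B be a unital completely positive map, and let φ : V →ₗ[ℂ] V be a unital completely positive map. Then the set { ψ : B →ₗ[ℂ] B | ψ is unital completely positive and ψ ∘ i = i ∘ φ } is a compact subset of the space of continuous linear maps B → B in the operator-norm topology. -/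
/-!
A unital completely positive map `ψ` on a C⋆-algebra is contractive: applying `ψ` to the positive
matrix `[[1, x], [x⋆, x⋆x]]` and compressing to a corner gives the Kadison–Schwarz inequality
`ψ(x)⋆ψ(x) ≤ ψ(x⋆x)`, hence `‖ψ x‖² ≤ ‖ψ(x⋆x)‖ ≤ ‖x‖²`. So the UCP maps lie in the closed unit
ball of `B →L[ℂ] B`, which is compact as `B` is finite-dimensional. Positivity of a matrix over `B`
is nonnegativity in the C⋆-algebra `CStarMatrix`, a closed condition, so being UCP and satisfying
`ψ ∘ i = i ∘ φ` are closed conditions on `ψ`.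
-/

open scoped NNReal ComplexOrder

open CStarMatrix

namespace PosOverB

variable {A : Type*} [Ring A] [StarRing A] {n : ℕ} {x : Matrix (Fin n) (Fin n) A}

lemma isSelfAdjoint (hx : PosOverB x) : IsSelfAdjoint x := by
  obtain ⟨y, rfl⟩ := hx
  exact .star_mul_self y

lemma star_mul_mul (hx : PosOverB x) (T : Matrix (Fin n) (Fin n) A) :
    PosOverB (star T * x * T) := by
  obtain ⟨y, rfl⟩ := hx
  exact ⟨y * T, by simp only [star_mul, Matrix.mul_assoc]⟩

lemma apply_self_nonneg_s6 [PartialOrder A] [StarOrderedRing A] (hx : PosOverB x) (k : Fin n) :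
    0 ≤ x k k := by
  obtain ⟨y, rfl⟩ := hx
  simpa [Matrix.mul_apply, Matrix.star_apply] using
    Finset.sum_nonneg fun l _ => star_mul_self_nonneg (y l k)

end PosOverB

section

variable {A : Type*} [CStarAlgebra A]

lemma posOverB_iff_nonneg [PartialOrder A] [StarOrderedRing A] {n : ℕ}
    {x : Matrix (Fin n) (Fin n) A} : PosOverB x ↔ 0 ≤ ofMatrix x := by
  -- instance search does not find these two instances on `CStarMatrix` by itself
  have : ContinuousFunctionalCalculus ℝ (CStarMatrix (Fin n) (Fin n) A) IsSelfAdjoint :=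
    IsSelfAdjoint.instContinuousFunctionalCalculus
  have : NonnegSpectrumClass ℝ (CStarMatrix (Fin n) (Fin n) A) :=
    CStarAlgebra.instNonnegSpectrumClass
  exact (CStarAlgebra.nonneg_iff_eq_star_mul_self (a := ofMatrix x)).symm

lemma isClosed_setOf_posOverB (n : ℕ) : IsClosed {x : Matrix (Fin n) (Fin n) A | PosOverB x} := by
  let _ := CStarAlgebra.spectralOrder A
  let _ := CStarAlgebra.spectralOrderedRing A
  simp only [posOverB_iff_nonneg]
  exact (CStarAlgebra.isClosed_nonneg (A := CStarMatrix (Fin n) (Fin n) A)).preimage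
    ofMatrixL.continuous

lemma isClosed_setOf_isUCPBB : IsClosed {ψ : A →L[ℂ] A | IsUCPBB A ψ} := by
  simp only [IsUCPBB, Set.ofPred_and, Set.ofPred_forall]
  refine (isClosed_eq (ContinuousLinearMap.apply ℂ A 1).continuous continuous_const).inter <|
    isClosed_iInter fun n => isClosed_iInter fun x => isClosed_iInter fun _ => ?_
  exact (isClosed_setOf_posOverB n).preimage <| continuous_pi fun k => continuous_pi fun l =>
    (ContinuousLinearMap.apply ℂ A (x k l)).continuous

namespace IsUCPBB

variable {ψ : A →ₗ[ℂ] A}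

lemma map_algebraMap (hψ : IsUCPBB A ψ) (r : ℝ) : ψ (algebraMap ℝ A r) = algebraMap ℝ A r := by
  rw [Algebra.algebraMap_eq_smul_one, LinearMap.map_smul_of_tower, hψ.1]

section Order

variable [PartialOrder A] [StarOrderedRing A]

lemma map_nonneg_s6 (hψ : IsUCPBB A ψ) {a : A} (ha : 0 ≤ a) : 0 ≤ ψ a := by
  obtain ⟨z, rfl⟩ := CStarAlgebra.nonneg_iff_eq_star_mul_self.mp ha
  have hz : PosOverB (Matrix.of fun _ _ : Fin 1 => star z * z) :=
    ⟨Matrix.of fun _ _ => z, by ext; simp [Matrix.mul_apply]⟩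
  simpa using (hψ.2 1 _ hz).apply_self_nonneg_s6 0

lemma map_le_map (hψ : IsUCPBB A ψ) {a b : A} (hab : a ≤ b) : ψ a ≤ ψ b := by
  simpa using hψ.map_nonneg_s6 (sub_nonneg.mpr hab)

lemma norm_map_le_of_nonneg (hψ : IsUCPBB A ψ) {a : A} (ha : 0 ≤ a) : ‖ψ a‖ ≤ ‖a‖ := by
  rw [CStarAlgebra.norm_le_iff_le_algebraMap _ (norm_nonneg a) (hψ.map_nonneg_s6 ha),
    ← hψ.map_algebraMap]
  exact hψ.map_le_map (IsSelfAdjoint.of_nonneg ha).le_algebraMap_norm_self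

lemma star_map_mul_map_le (hψ : IsUCPBB A ψ) (x : A) : star (ψ x) * ψ x ≤ ψ (star x * x) := by
  have hM : PosOverB !![(1 : A), x; star x, star x * x] :=
    ⟨!![1, x; 0, 0], by ext i j; fin_cases i <;> fin_cases j <;> simp [Matrix.mul_apply]⟩
  have hψM := hψ.2 2 _ hM
  have hψ_star : ψ (star x) = star (ψ x) := by
    simpa using congrFun (congrFun hψM.isSelfAdjoint.symm 1) 0
  -- conjugating by `T` isolates `ψ (x⋆x) - ψ(x)⋆ ψ(x)` in the corner entry
  let T : Matrix (Fin 2) (Fin 2) A := !![0, -ψ x; 0, 1]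
  simpa [T, Matrix.mul_apply, Fin.sum_univ_two, hψ.1, hψ_star] using
    (hψM.star_mul_mul T).apply_self_nonneg_s6 1

end Order

lemma norm_map_le (hψ : IsUCPBB A ψ) (x : A) : ‖ψ x‖ ≤ ‖x‖ := by
  let _ := CStarAlgebra.spectralOrder A
  let _ := CStarAlgebra.spectralOrderedRing A
  have hsq : ‖ψ x‖ ^ 2 ≤ ‖x‖ ^ 2 := calc
    ‖ψ x‖ ^ 2 = ‖star (ψ x) * ψ x‖ := by rw [CStarRing.norm_star_mul_self, sq]
    _ ≤ ‖ψ (star x * x)‖ := CStarAlgebra.norm_le_norm_of_nonneg_of_le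
      (star_mul_self_nonneg _) (hψ.star_map_mul_map_le x)
    _ ≤ ‖star x * x‖ := hψ.norm_map_le_of_nonneg (star_mul_self_nonneg x)
    _ = ‖x‖ ^ 2 := by rw [CStarRing.norm_star_mul_self, sq]
  exact (pow_le_pow_iff_left₀ (norm_nonneg _) (norm_nonneg _) two_ne_zero).mp hsq

end IsUCPBB

lemma isCompact_setOf_isUCPBB [FiniteDimensional ℂ A] :
    IsCompact {ψ : A →L[ℂ] A | IsUCPBB A ψ} := by
  refine (isCompact_closedBall 0 1).of_isClosed_subset isClosed_setOf_isUCPBB fun ψ hψ => ?_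
  rw [mem_closedBall_zero_iff]
  exact ψ.opNorm_le_bound zero_le_one fun x => by simpa using hψ.norm_map_le x

end

theorem isCompact_ucp_extensions_general
    {d : ℕ} (V : Submodule ℂ (Matrix (Fin d) (Fin d) ℂ))
    (B : Type*) [NormedRing B] [StarRing B] [CStarRing B] [NormedAlgebra ℂ B]
    [CompleteSpace B] [StarModule ℂ B] [FiniteDimensional ℂ B]
    (i : V →ₗ[ℂ] B)
    (φ : V →ₗ[ℂ] V) :
    IsCompact {ψ : B →L[ℂ] B |
      IsUCPBB B (ψ : B →ₗ[ℂ] B) ∧ ∀ v : V, ψ (i v) = i (φ v)} := by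
  let _ : CStarAlgebra B := {}
  have hclosed : IsClosed {ψ : B →L[ℂ] B | ∀ v : V, ψ (i v) = i (φ v)} := by
    simp only [Set.ofPred_forall]
    exact isClosed_iInter fun v =>
      isClosed_eq (ContinuousLinearMap.apply ℂ B (i v)).continuous continuous_const
  exact isCompact_setOf_isUCPBB.inter_right hclosed

/-- **Compactness of the set of UCP extensions**: for a matricial operator system `V`, a
finite-dimensional C*-algebra `B`, a UCP map `i : V → B` and a UCP map `φ` on `V`, the set of
UCP maps `ψ` on `B` satisfying `ψ ∘ i = i ∘ φ` is compact in the operator-norm topology. -/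
theorem isCompact_ucp_extensions
    {d : ℕ} (V : Submodule ℂ (Matrix (Fin d) (Fin d) ℂ))
    (h1 : (1 : Matrix (Fin d) (Fin d) ℂ) ∈ V)
    (hstar : ∀ v ∈ V, v.conjTranspose ∈ V)
    (B : Type*) [NormedRing B] [StarRing B] [CStarRing B] [NormedAlgebra ℂ B]
    [CompleteSpace B] [StarModule ℂ B] [FiniteDimensional ℂ B]
    (i : V →ₗ[ℂ] B)
    (hiucp : IsUCPVB V B h1 i)
    (φ : V →ₗ[ℂ] V)
    (hφucp : IsUCPVV V h1 φ) :
    IsCompact {ψ : B →L[ℂ] B |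
      IsUCPBB B (ψ : B →ₗ[ℂ] B) ∧ ∀ v : V, ψ (i v) = i (φ v)} :=
  isCompact_ucp_extensions_general V B i φ
end
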